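/- Correctness of the MSB-based secure comparison CMP: let l ≥ 1 and let a, b : ℤ satisfy −2^(l−1) ≤ a − b < 2^(l−1). Then the most significant bit of the l-bit two's-complement representation of a − b indicates the comparison, i.e., Nat.testBit (((a − b) % 2^l).toNat) (l − 1) = true if and only if a < b (here % denotes the integer remainder taking values in [0, 2^l)). -/
import Mathlib

lemma testbit_of_mem (n k : ℕ) (h1 : 2^k ≤ n) (h2 : n < 2^(k+1)) :
    Nat.testBit n k = true := by
  rw [Nat.testBit_eq_decide_div_mod_eq]
  have hd : n / 2^k = 1 :=
    Nat.div_eq_of_lt_le (by simpa using h1) (by simpa [Nat.pow_succ, Nat.mul_comm] using h2)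
  simp [hd]

/-- Correctness of the MSB-based secure comparison: for integers `a, b` whose
    difference fits in `l`-bit two's complement, the most significant bit of the
    `l`-bit representation of `a - b` is set iff `a < b`. -/
theorem msb_cmp_correct (l : ℕ) (hl : 1 ≤ l) (a b : ℤ)
    (h₁ : -2 ^ (l - 1) ≤ a - b) (h₂ : a - b < 2 ^ (l - 1)) :
    Nat.testBit ((a - b) % 2 ^ l).toNat (l - 1) = true ↔ a < b := by
  set d := a - b with hd
  have hle : l - 1 + 1 = l := by omega
  have hpow : (2:ℤ)^l = 2^(l-1) * 2 := by rw [← pow_succ, hle]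
  have hp : (0:ℤ) < 2^(l-1) := pow_pos (by norm_num) _
  have hc1 : ((2^(l-1) : ℕ) : ℤ) = 2^(l-1) := by push_cast; ring
  have hc2 : ((2^(l-1+1) : ℕ) : ℤ) = 2^(l-1) * 2 := by push_cast; ring
  by_cases hdn : 0 ≤ d
  · have hmod : d % 2^l = d := Int.emod_eq_of_lt hdn (by nlinarith)
    rw [hmod]
    have hlt : d.toNat < 2^(l-1) := by omega
    rw [Nat.testBit_lt_two_pow hlt]
    simp; omega
  · push_neg at hdn
    have hmod : d % 2^l = d + 2^l := by
      have e1 : d % 2^l = (d + 2^l) % 2^l := by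
        rw [show d + 2^l = d + 2^l * 1 by ring, Int.add_mul_emod_self_left]
      rw [e1, Int.emod_eq_of_lt (by nlinarith) (by nlinarith)]
    rw [hmod]
    have h1 : 2^(l-1) ≤ (d + 2^l).toNat := by
      have : (2:ℤ)^(l-1) ≤ d + 2^l := by nlinarith
      omega
    have h2 : (d + 2^l).toNat < 2^(l-1+1) := by
      have : d + 2^l < 2^(l-1) * 2 := by nlinarith
      omega
    rw [testbit_of_mem _ _ h1 h2]
    simp; omega
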